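/- arXiv:1711.02381 — 3 statements merged into one kernel-verified Lean document; each statement's English description precedes it below -/
import Mathlib

section
/- Let A be the (n−2)×n integer matrix from the Gale-dual construction (rows: ([2,k+2], −[1,k+2], 0,…,[1,2],…,0) for k=1,…,n−3 and a final all-ones row, where [i,j]=det(b_i,b_j) for rows b_i of an n×2 matrix B whose rows span ℤ² and sum to zero). Then every maximal ((n−2)×(n−2)) minor of A equals ±[1,2]^{n−4}·[i,j] for some pair i ≠ j. -/
/-!
Every row of `A` is orthogonal to both columns of `B`: for the first `n - 3` rows this is the
relation `[2,k] b₁ - [1,k] b₂ + [1,2] b_k = 0` between three vectors of the plane, and for the row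
of ones it is `∑ bᵢ = 0`. Whenever `A B = 0`, the maximal minor of `A` on a set of columns `S`
times the minor of `B` on the rows outside another set `T` agrees up to sign with the same product
for `S` and `T` exchanged: both are the determinant of `A` completed by unit rows times `B`
completed by unit columns. Taking `T = {3, …, n}`, where `A` is lower triangular with determinant
`[1,2]^(n-3)` and the complementary minor of `B` is `[1,2]`, and cancelling `[1,2]` gives the claim.
-/

def det2 {R : Type*} [CommRing R] (u w : Fin 2 → R) : R := u 0 * w 1 - u 1 * w 0

theorem Function.Embedding.exists_sum_equiv_comp_inl {α ι : Type*} [Fintype α] [Fintype ι]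
    {k : ℕ} (f : α ↪ ι) (h : Fintype.card ι = Fintype.card α + k) :
    ∃ σ : α ⊕ Fin k ≃ ι, σ ∘ Sum.inl = f := by
  classical
  have hc : Fintype.card {i // i ∉ Set.range f} = k := by
    rw [Fintype.card_subtype_compl, Set.card_range_of_injective f.injective]; omega
  exact ⟨(Equiv.sumCongr (Equiv.ofInjective f f.injective) (Fintype.equivFinOfCardEq hc).symm).trans
    (Equiv.sumCompl _), rfl⟩

namespace Matrix

variable {R ι α β : Type*} [CommRing R]

theorem det_submatrix_fin_two (B : Matrix ι (Fin 2) R) (r : Fin 2 → ι) :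
    (B.submatrix r id).det = det2 (B (r 0)) (B (r 1)) := by
  simp [det_fin_two, det2]

variable [Fintype α] [DecidableEq α]

theorem associated_det_submatrix_equiv_id (M : Matrix ι α R) (e₁ e₂ : α ≃ ι) :
    Associated (M.submatrix e₁ id).det (M.submatrix e₂ id).det := by
  have : M.submatrix e₁ id = (M.submatrix e₂ id).submatrix (e₁.trans e₂.symm) id := by
    ext; simp
  rw [this, det_permute]
  exact associated_unit_mul_left _ _ ((Equiv.Perm.sign _).isUnit.map (Int.castRingHom R))

variable [Fintype ι] [DecidableEq ι] [Fintype β] [DecidableEq β]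

theorem associated_det_mul_det_of_mul_eq_zero (A : Matrix α ι R) (B : Matrix ι β R)
    (hAB : A * B = 0) (σ τ : α ⊕ β ≃ ι) :
    Associated ((A.submatrix id (σ ∘ Sum.inl)).det * (B.submatrix (τ ∘ Sum.inr) id).det)
      ((A.submatrix id (τ ∘ Sum.inl)).det * (B.submatrix (σ ∘ Sum.inr) id).det) := by
  set N : Matrix (α ⊕ β) ι R := fromRows A ((1 : Matrix ι ι R).submatrix (σ ∘ Sum.inr) id)
  set G : Matrix ι (α ⊕ β) R := fromCols ((1 : Matrix ι ι R).submatrix id (τ ∘ Sum.inl)) B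
  have hN : (N.submatrix id σ).det = (A.submatrix id (σ ∘ Sum.inl)).det := by
    have : N.submatrix id σ = fromBlocks (A.submatrix id (σ ∘ Sum.inl))
        (A.submatrix id (σ ∘ Sum.inr)) 0 1 := by
      ext (i | i) (j | j) <;> simp [N, one_apply, σ.injective.eq_iff]
    rw [this, det_fromBlocks_zero₂₁, det_one, mul_one]
  have hG : (G.submatrix τ id).det = (B.submatrix (τ ∘ Sum.inr) id).det := by
    have : G.submatrix τ id = fromBlocks 1 (B.submatrix (τ ∘ Sum.inl) id) 0
        (B.submatrix (τ ∘ Sum.inr) id) := by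
      ext (i | i) (j | j) <;> simp [G, one_apply, τ.injective.eq_iff]
    rw [this, det_fromBlocks_zero₂₁, det_one, one_mul]
  have hNG : (N * G).det =
      (A.submatrix id (τ ∘ Sum.inl)).det * (B.submatrix (σ ∘ Sum.inr) id).det := by
    have hA : A * (1 : Matrix ι ι R).submatrix id (τ ∘ Sum.inl) = A.submatrix id (τ ∘ Sum.inl) := by
      ext; simp [mul_apply, one_apply]
    have hB : (1 : Matrix ι ι R).submatrix (σ ∘ Sum.inr) id * B = B.submatrix (σ ∘ Sum.inr) id := by
      ext; simp [mul_apply, one_apply]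
    rw [fromRows_mul_fromCols, hAB, hA, hB, det_fromBlocks_zero₁₂]
  have hNG' : N * G = N.submatrix id σ * G.submatrix σ id := by
    rw [submatrix_mul_equiv, submatrix_id_id]
  rw [← hN, ← hNG, ← hG, hNG', det_mul]
  exact (associated_det_submatrix_equiv_id G τ σ).mul_left _

end Matrix

section GaleDual

variable {R : Type*} [CommRing R]

theorem det2_smul_sub_det2_smul_add_det2_smul_eq_zero (u v w : Fin 2 → R) :
    det2 v w • u - det2 u w • v + det2 u v • w = 0 := by
  ext i; fin_cases i <;> simp [det2] <;> ring

def galeDual {m : ℕ} (B : Matrix (Fin (m + 4)) (Fin 2) R) :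
    Matrix (Fin (m + 2)) (Fin (m + 4)) R :=
  Matrix.of fun k j =>
    if (k : ℕ) < m + 1 then
      (if (j : ℕ) = 0 then det2 (B ⟨1, by omega⟩) (B ⟨(k : ℕ) + 2, by omega⟩)
        else if (j : ℕ) = 1 then -det2 (B ⟨0, by omega⟩) (B ⟨(k : ℕ) + 2, by omega⟩)
        else if (j : ℕ) = (k : ℕ) + 2 then det2 (B ⟨0, by omega⟩) (B ⟨1, by omega⟩)
        else 0)
    else 1

namespace galeDual

variable {m : ℕ} (B : Matrix (Fin (m + 4)) (Fin 2) R)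

theorem row_eq_of_lt {k : Fin (m + 2)} (hk : (k : ℕ) < m + 1) :
    galeDual B k =
      Pi.single ⟨0, by omega⟩ (det2 (B ⟨1, by omega⟩) (B ⟨(k : ℕ) + 2, by omega⟩)) +
      Pi.single ⟨1, by omega⟩ (-det2 (B ⟨0, by omega⟩) (B ⟨(k : ℕ) + 2, by omega⟩)) +
      Pi.single ⟨(k : ℕ) + 2, by omega⟩ (det2 (B ⟨0, by omega⟩) (B ⟨1, by omega⟩)) := by
  ext j
  simp only [galeDual, Matrix.of_apply, if_pos hk, Pi.add_apply, Pi.single_apply, Fin.ext_iff]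
  split_ifs <;> first | omega | simp

theorem mul_eq_zero (hsum : ∀ s : Fin 2, ∑ i, B i s = 0) : galeDual B * B = 0 := by
  ext k s
  rw [Matrix.mul_apply', Matrix.zero_apply]
  by_cases hk : (k : ℕ) < m + 1
  · rw [row_eq_of_lt B hk]
    simp only [add_dotProduct, single_dotProduct]
    simpa [sub_eq_add_neg] using congrFun (det2_smul_sub_det2_smul_add_det2_smul_eq_zero
      (B ⟨0, by omega⟩) (B ⟨1, by omega⟩) (B ⟨(k : ℕ) + 2, by omega⟩)) s
  · simpa only [galeDual, Matrix.of_apply, if_neg hk, dotProduct, one_mul] using hsum s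

theorem det_submatrix_of_val_eq (e : Fin (m + 2) → Fin (m + 4)) (he : ∀ l, (e l : ℕ) = l + 2) :
    ((galeDual B).submatrix id e).det = det2 (B ⟨0, by omega⟩) (B ⟨1, by omega⟩) ^ (m + 1) := by
  set d := det2 (B ⟨0, by omega⟩) (B ⟨1, by omega⟩)
  have hlower : ((galeDual B).submatrix id e).IsLowerTriangular := by
    intro k l hkl
    have : (k : ℕ) < l := hkl
    have := l.isLt
    simp only [galeDual, Matrix.submatrix_apply, id, Matrix.of_apply, he]
    split_ifs <;> first | omega | contradiction | rfl
  have hdiag : ∀ l, (galeDual B).submatrix id e l l = if (l : ℕ) < m + 1 then d else 1 := by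
    intro l
    simp only [galeDual, Matrix.submatrix_apply, id, Matrix.of_apply, he]
    split_ifs <;> first | omega | contradiction | rfl
  rw [Matrix.det_of_isLowerTriangular _ hlower, Finset.prod_congr rfl fun l _ => hdiag l,
    Fin.prod_univ_castSucc]
  simp only [Fin.val_castSucc, Fin.is_lt, if_true, Fin.val_last, lt_irrefl, if_false,
    Finset.prod_const, Finset.card_univ, Fintype.card_fin, mul_one]

end galeDual

end GaleDual

/-- For the `(n−2) × n` Gale-dual matrix `A` built from an `n × 2` integer matrix
`B` whose rows span `ℤ²` and sum to zero, with `[1,2] := det(b_1,b_2) ≠ 0`, every maximal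
(`(n−2) × (n−2)`) minor of `A` equals `± [1,2]^{n−4} · [i,j]` for some pair `i ≠ j`. -/
theorem maximal_minors_of_gale_dual_matrix
    (n : ℕ) (hn : 4 ≤ n) (B : Matrix (Fin n) (Fin 2) ℤ)
    (hsum : ∀ k : Fin 2, ∑ i : Fin n, B i k = 0)
    (h12 : det2 (B ⟨0, by omega⟩) (B ⟨1, by omega⟩) ≠ 0)
    (A : Matrix (Fin (n - 2)) (Fin n) ℤ)
    (hA : ∀ (k : Fin (n - 2)) (j : Fin n),
      A k j =
        if (k : ℕ) < n - 3 then
          (if (j : ℕ) = 0 then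
              det2 (B ⟨1, by omega⟩) (B ⟨(k : ℕ) + 2, by have := k.isLt; omega⟩)
            else if (j : ℕ) = 1 then
              -det2 (B ⟨0, by omega⟩) (B ⟨(k : ℕ) + 2, by have := k.isLt; omega⟩)
            else if (j : ℕ) = (k : ℕ) + 2 then det2 (B ⟨0, by omega⟩) (B ⟨1, by omega⟩)
            else 0)
        else 1) :
    ∀ f : Fin (n - 2) ↪ Fin n, ∃ i j : Fin n, i ≠ j ∧
      ((A.submatrix id f).det
          = det2 (B ⟨0, by omega⟩) (B ⟨1, by omega⟩) ^ (n - 4) * det2 (B i) (B j) ∨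
        (A.submatrix id f).det
          = -(det2 (B ⟨0, by omega⟩) (B ⟨1, by omega⟩) ^ (n - 4) * det2 (B i) (B j))) := by
  obtain ⟨m, rfl⟩ : ∃ m, n = m + 4 := ⟨n - 4, by omega⟩
  intro f
  obtain rfl : A = galeDual B := by ext k j; rw [hA]; rfl
  obtain ⟨σ, hσ⟩ := f.exists_sum_equiv_comp_inl (k := 2) (by simp only [Fintype.card_fin]; omega)
  let τ : Fin (m + 2) ⊕ Fin 2 ≃ Fin (m + 4) :=
    (Equiv.sumComm _ _).trans (finSumFinEquiv.trans (finCongr (by omega)))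
  have key := Matrix.associated_det_mul_det_of_mul_eq_zero _ B (galeDual.mul_eq_zero B hsum) σ τ
  rw [hσ, galeDual.det_submatrix_of_val_eq B (τ ∘ Sum.inl) (fun l => by simp [τ]),
    Matrix.det_submatrix_fin_two, Matrix.det_submatrix_fin_two, pow_succ, mul_right_comm] at key
  refine ⟨σ (.inr 0), σ (.inr 1), σ.injective.ne (by simp), Int.associated_iff.mp ?_⟩
  exact key.of_mul_right (Associated.refl _) h12
end

section
/- Let B be an n×1 integer matrix (a column vector) with entries b_1,…,b_n summing to zero, defining the homogeneous lattice ideal I_B = (x^{l⁺} − x^{l⁻} : l ∈ ℤB) in k[x_1,…,x_n]. Then deg(I_B) = Σ_{i : b_i > 0} b_i. -/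
/-!
Every element of `ℤ·b` is `k • b`. For `k = m ≥ 0` the binomial of `m • b` is
`(x^{b⁺})^m - (x^{b⁻})^m`, a multiple of `x^{b⁺} - x^{b⁻}`, and passing to `-k` only changes its
sign; hence `I_B` is generated by `x^{b⁺} - x^{b⁻}`. Since `Σ bᵢ = 0`, the monomials `x^{b⁺}` and
`x^{b⁻}` have the same degree `Σ_{bᵢ > 0} bᵢ`, so their difference is homogeneous of that degree,
and it is nonzero as soon as `b ≠ 0`.
-/

lemma Int.toNat_natCast_mul (m : ℕ) (a : ℤ) : ((m : ℤ) * a).toNat = m * a.toNat := by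
  rcases le_total 0 a with h | h
  · lift a to ℕ using h
    norm_cast
  · rw [Int.toNat_of_nonpos h,
      Int.toNat_of_nonpos (mul_nonpos_of_nonneg_of_nonpos m.cast_nonneg h), mul_zero]

lemma Finset.sum_toNat_neg_eq_sum_toNat {ι : Type*} {s : Finset ι} {l : ι → ℤ}
    (hsum : ∑ i ∈ s, l i = 0) : ∑ i ∈ s, (-l i).toNat = ∑ i ∈ s, (l i).toNat := by
  have : ((∑ i ∈ s, (l i).toNat : ℕ) : ℤ) - ∑ i ∈ s, ((-l i).toNat : ℕ) = 0 := by
    simpa only [Nat.cast_sum, ← Finset.sum_sub_distrib, Int.toNat_sub_toNat_neg] using hsum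
  omega

namespace MvPolynomial

section LatticeBinomial

variable {σ : Type*} [Finite σ] (R : Type*) [CommRing R]

/-- The exponent vector `l⁺`; the exponent `l⁻` is `latticeExponent (-l)`. -/
noncomputable def latticeExponent (l : σ → ℤ) : σ →₀ ℕ :=
  Finsupp.equivFunOnFinite.symm fun i => (l i).toNat

noncomputable def latticeBinomial (l : σ → ℤ) : MvPolynomial σ R :=
  monomial (latticeExponent l) 1 - monomial (latticeExponent (-l)) 1

variable {R}

@[simp]
lemma latticeExponent_apply (l : σ → ℤ) (i : σ) : latticeExponent l i = (l i).toNat := rfl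

lemma latticeExponent_natCast_smul (m : ℕ) (l : σ → ℤ) :
    latticeExponent ((m : ℤ) • l) = m • latticeExponent l := by
  ext i
  simp [Int.toNat_natCast_mul]

lemma latticeBinomial_neg (l : σ → ℤ) : latticeBinomial R (-l) = -latticeBinomial R l := by
  rw [latticeBinomial, latticeBinomial, neg_neg, neg_sub]

lemma latticeBinomial_dvd_zsmul (l : σ → ℤ) (k : ℤ) :
    latticeBinomial R l ∣ latticeBinomial R (k • l) := by
  have dvd_natCast_smul (m : ℕ) : latticeBinomial R l ∣ latticeBinomial R ((m : ℤ) • l) := by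
    rw [latticeBinomial, latticeBinomial, ← smul_neg, latticeExponent_natCast_smul,
      latticeExponent_natCast_smul, ← one_pow m, ← monomial_pow, ← monomial_pow, one_pow]
    exact sub_dvd_pow_sub_pow _ _ m
  obtain ⟨m, rfl | rfl⟩ := Int.eq_nat_or_neg k
  · exact dvd_natCast_smul m
  · rw [neg_smul, latticeBinomial_neg]
    exact (dvd_natCast_smul m).neg_right

lemma span_latticeBinomial_span_singleton (b : σ → ℤ) :
    Ideal.span {f : MvPolynomial σ R | ∃ l ∈ Submodule.span ℤ {b}, f = latticeBinomial R l} =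
      Ideal.span {latticeBinomial R b} := by
  refine le_antisymm (Ideal.span_le.2 ?_) (Ideal.span_mono ?_)
  · rintro f ⟨l, hl, rfl⟩
    obtain ⟨k, rfl⟩ := Submodule.mem_span_singleton.1 hl
    exact Ideal.mem_span_singleton.2 (latticeBinomial_dvd_zsmul b k)
  · rintro f rfl
    exact ⟨b, Submodule.mem_span_singleton_self b, rfl⟩

lemma latticeBinomial_ne_zero [Nontrivial R] {l : σ → ℤ} (hl : l ≠ 0) :
    latticeBinomial R l ≠ 0 := by
  obtain ⟨i, hi : l i ≠ 0⟩ := Function.ne_iff.1 hl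
  rw [latticeBinomial, sub_ne_zero, Ne, monomial_left_inj one_ne_zero]
  intro h
  have := DFunLike.congr_fun h i
  simp only [latticeExponent_apply, Pi.neg_apply] at this
  omega

variable [Fintype σ]

lemma degree_latticeExponent (l : σ → ℤ) : (latticeExponent l).degree = ∑ i, (l i).toNat := by
  simp [Finsupp.degree_eq_sum]

lemma isHomogeneous_latticeBinomial {l : σ → ℤ} (hsum : ∑ i, l i = 0) :
    (latticeBinomial R l).IsHomogeneous (∑ i, (l i).toNat) :=
  (isHomogeneous_monomial _ (degree_latticeExponent l)).sub
    (isHomogeneous_monomial _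
      ((degree_latticeExponent (-l)).trans (Finset.sum_toNat_neg_eq_sum_toNat hsum)))

lemma totalDegree_latticeBinomial [Nontrivial R] {l : σ → ℤ} (hsum : ∑ i, l i = 0) :
    (latticeBinomial R l).totalDegree = ∑ i, (l i).toNat := by
  rcases eq_or_ne l 0 with rfl | hl
  · simp [latticeBinomial]
  · exact (isHomogeneous_latticeBinomial hsum).totalDegree (latticeBinomial_ne_zero hl)

end LatticeBinomial

end MvPolynomial

open MvPolynomial in
theorem degree_codim_one_lattice_ideal_general
    (n : ℕ) (b : Fin n → ℤ) (hsum : ∑ i, b i = 0) :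
    Ideal.span {f : MvPolynomial (Fin n) ℚ |
        ∃ l ∈ (Submodule.span ℤ {b} : Submodule ℤ (Fin n → ℤ)),
          f = MvPolynomial.monomial (Finsupp.equivFunOnFinite.symm fun i => (l i).toNat) 1
              - MvPolynomial.monomial (Finsupp.equivFunOnFinite.symm fun i => (-l i).toNat) 1}
      = Ideal.span
          {MvPolynomial.monomial (Finsupp.equivFunOnFinite.symm fun i => (b i).toNat) (1 : ℚ)
            - MvPolynomial.monomial (Finsupp.equivFunOnFinite.symm fun i => (-b i).toNat) 1} ∧
    (MvPolynomial.monomial (Finsupp.equivFunOnFinite.symm fun i => (b i).toNat) (1 : ℚ)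
        - MvPolynomial.monomial (Finsupp.equivFunOnFinite.symm fun i => (-b i).toNat) 1).totalDegree
      = ∑ i ∈ Finset.univ.filter (fun i => 0 < b i), (b i).toNat := by
  have sum_toNat_eq_sum_pos :
      ∑ i, (b i).toNat = ∑ i ∈ Finset.univ.filter (0 < b ·), (b i).toNat :=
    (Finset.sum_filter_of_ne fun i _ h => by omega).symm
  exact ⟨span_latticeBinomial_span_singleton (R := ℚ) b,
    (totalDegree_latticeBinomial (R := ℚ) hsum).trans sum_toNat_eq_sum_pos⟩

/-- Let `b = (b_1,…,b_n)` be a nonzero integer vector with `Σ b_i = 0`,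
generating the rank-1 lattice `ℤ·b ⊆ ℤⁿ`, and let `I_B` be the associated homogeneous lattice
ideal, generated by the binomials `x^{l⁺} − x^{l⁻}` for `l ∈ ℤ·b`.  Then `I_B` is principal,
generated by the binomial `x^{b⁺} − x^{b⁻}`, whose (total) degree — the degree of `I_B` —
equals `Σ_{i : b_i > 0} b_i`. -/
theorem degree_codim_one_lattice_ideal
    (n : ℕ) (b : Fin n → ℤ) (hb : b ≠ 0) (hsum : ∑ i, b i = 0) :
    Ideal.span {f : MvPolynomial (Fin n) ℚ |
        ∃ l ∈ (Submodule.span ℤ {b} : Submodule ℤ (Fin n → ℤ)),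
          f = MvPolynomial.monomial (Finsupp.equivFunOnFinite.symm fun i => (l i).toNat) 1
              - MvPolynomial.monomial (Finsupp.equivFunOnFinite.symm fun i => (-l i).toNat) 1}
      = Ideal.span
          {MvPolynomial.monomial (Finsupp.equivFunOnFinite.symm fun i => (b i).toNat) (1 : ℚ)
            - MvPolynomial.monomial (Finsupp.equivFunOnFinite.symm fun i => (-b i).toNat) 1} ∧
    (MvPolynomial.monomial (Finsupp.equivFunOnFinite.symm fun i => (b i).toNat) (1 : ℚ)
        - MvPolynomial.monomial (Finsupp.equivFunOnFinite.symm fun i => (-b i).toNat) 1).totalDegree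
      = ∑ i ∈ Finset.univ.filter (fun i => 0 < b i), (b i).toNat :=
  degree_codim_one_lattice_ideal_general n b hsum
end

section
/- (Gale duality for faces) Let A be a d×n integer matrix with (1,…,1) in its row space and P = Conv(a_1,…,a_n); let B be an n×(n−d) integer matrix whose columns span ker(A) over ℚ, with rows b_i. For I ⊆ {1,…,n}, there exists a face β of P with {i : a_i ∈ β} = I if and only if there exist positive real numbers t_i (i ∈ I^c) with Σ_{i∈I^c} t_i b_i = 0. -/
open Set Matrix Module

/-!
If a functional `l` exposes a face of `P` and attains the maximum `c` on it, the slack vector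
`u i = c - l (a i)` vanishes exactly on the indices of the points in the face and is positive
elsewhere; conversely a vector of this sign pattern of the form `u i = -l (a i)` exposes such a
face.
Since `(1,…,1)` lies in the row space of `A`, these slack vectors are exactly the row space of `A`,
and Gale duality identifies the real row space of `A` with the vectors `u` such that
`∑ i, u i • b i = 0`. Passing from `ℚ` to `ℝ` is a rank count: ranks do not drop under field
extension, and `rank A + rank B = n`.
-/

theorem exists_isExposed_convexHull_iff {𝕜 E ι : Type*} [Field 𝕜] [LinearOrder 𝕜]
    [IsStrictOrderedRing 𝕜] [TopologicalSpace 𝕜] [AddCommGroup E] [TopologicalSpace E]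
    [Module 𝕜 E] (a : ι → E) (I : Set ι) :
    (∃ β, IsExposed 𝕜 (convexHull 𝕜 (range a)) β ∧ ∀ i, a i ∈ β ↔ i ∈ I) ↔
      ∃ (l : StrongDual 𝕜 E) (c : 𝕜), (∀ i ∈ I, l (a i) = c) ∧ ∀ i ∉ I, l (a i) < c := by
  have ha : ∀ i, a i ∈ convexHull 𝕜 (range a) := fun i => subset_convexHull 𝕜 _ ⟨i, rfl⟩
  constructor
  · rintro ⟨β, hβ, hmem⟩
    rcases β.eq_empty_or_nonempty with rfl | hne
    · exact ⟨0, 1, fun i hi => ((hmem i).2 hi).elim, fun _ _ => zero_lt_one⟩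
    obtain ⟨l, rfl⟩ := hβ hne
    obtain ⟨x, hx, hxmax⟩ := hne
    refine ⟨l, l x, fun i hi => le_antisymm (hxmax _ (ha i)) (((hmem i).2 hi).2 x hx),
      fun i hi => ?_⟩
    by_contra! h
    exact hi ((hmem i).1 ⟨ha i, fun y hy => (hxmax y hy).trans h⟩)
  · rintro ⟨l, c, hI, hIc⟩
    rcases I.eq_empty_or_nonempty with rfl | ⟨i₀, hi₀⟩
    · exact ⟨∅, isExposed_empty, by simp⟩
    have hle : ∀ y ∈ convexHull 𝕜 (range a), l y ≤ c := by
      refine fun y hy => convexHull_min ?_ (convex_halfSpace_le l.toLinearMap.isLinear c) hy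
      rintro _ ⟨i, rfl⟩
      by_cases hi : i ∈ I
      exacts [(hI i hi).le, (hIc i hi).le]
    refine ⟨l.toExposed _, ContinuousLinearMap.toExposed.isExposed, fun i =>
      ⟨fun hi => ?_, fun hi => ⟨ha i, fun y hy => hI i hi ▸ hle y hy⟩⟩⟩
    by_contra h
    exact (hIc i h).not_ge (hI i₀ hi₀ ▸ hi.2 _ (ha i₀))

namespace Matrix

section Field

variable {m n o K : Type*} [Fintype m] [Fintype n] [Field K]

theorem rank_le_rank_map_algebraMap (L : Type*) [Field L] [Algebra K L] (A : Matrix m n K) :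
    A.rank ≤ (A.map (algebraMap K L)).rank := by
  classical
  obtain ⟨κ, a, ha, hspan, hli⟩ := exists_linearIndependent' K A.col
  have : Fintype κ := Fintype.ofInjective a ha
  have hliL : LinearIndependent L ((A.map (algebraMap K L)).col ∘ a) :=
    linearIndependent_algebraMap_comp_iff.mpr hli
  rw [rank_eq_finrank_span_cols, rank_eq_finrank_span_cols, ← hspan, finrank_span_eq_card hli,
    ← finrank_span_eq_card hliL]
  exact Submodule.finrank_mono (Submodule.span_mono (range_comp_subset_range _ _))

theorem range_vecMulLinear_eq_ker_of_mul_eq_zero [Fintype o] {A : Matrix m n K}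
    {B : Matrix n o K} (hAB : A * B = 0) (hrank : Fintype.card n ≤ A.rank + B.rank) :
    LinearMap.range A.vecMulLinear = LinearMap.ker B.vecMulLinear := by
  have hle : LinearMap.range A.vecMulLinear ≤ LinearMap.ker B.vecMulLinear := by
    rintro _ ⟨w, rfl⟩
    simp [vecMul_vecMul, hAB]
  refine Submodule.eq_of_le_of_finrank_le hle ?_
  have hB := LinearMap.finrank_range_add_finrank_ker B.vecMulLinear
  rw [← mulVecLin_transpose, ← mulVecLin_transpose] at *
  rw [← rank, rank_transpose]
  rw [← rank, rank_transpose, finrank_pi] at hB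
  omega

theorem range_vecMulLinear_map_eq_ker_of_ker_eq_range [Fintype o] (L : Type*) [Field L]
    [Algebra K L] {A : Matrix m n K} {B : Matrix n o K}
    (h : LinearMap.ker A.mulVecLin = LinearMap.range B.mulVecLin) :
    LinearMap.range (A.map (algebraMap K L)).vecMulLinear =
      LinearMap.ker (B.map (algebraMap K L)).vecMulLinear := by
  have hAB : A * B = 0 := by
    classical
    apply toLin'.injective
    rw [toLin'_apply', toLin'_apply', mulVecLin_mul, mulVecLin_zero, ← LinearMap.range_le_ker_iff,
      h]
  have hrank : A.rank + B.rank = Fintype.card n := by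
    rw [rank, rank, ← h, LinearMap.finrank_range_add_finrank_ker, finrank_pi]
  refine range_vecMulLinear_eq_ker_of_mul_eq_zero ?_ ?_
  · rw [← Matrix.map_mul, hAB, Matrix.map_zero _ (map_zero _)]
  · have := rank_le_rank_map_algebraMap L A
    have := rank_le_rank_map_algebraMap L B
    omega

end Field

section Semiring

variable {ι k R : Type*} [Fintype ι] [DecidableEq ι] [CommSemiring R]

theorem vecMul_eq_sum_compl {u : ι → R} (B : Matrix ι k R) {I : Finset ι}
    (hu : ∀ i ∈ I, u i = 0) : u ᵥ* B = ∑ i ∈ Iᶜ, u i • B i := by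
  rw [vecMul_eq_sum]
  refine (Finset.sum_subset (Finset.subset_univ _) fun i _ hi => ?_).symm
  rw [hu i (by simpa using hi), zero_smul]

theorem exists_mem_ker_vecMulLinear_iff [PartialOrder R] (B : Matrix ι k R) (I : Finset ι) :
    (∃ u ∈ LinearMap.ker B.vecMulLinear, (∀ i ∈ I, u i = 0) ∧ ∀ i ∉ I, 0 < u i) ↔
      ∃ t : ι → R, (∀ i ∉ I, 0 < t i) ∧ ∑ i ∈ Iᶜ, t i • B i = 0 := by
  constructor
  · rintro ⟨u, hker, hI, hIc⟩
    exact ⟨u, hIc, by rw [← vecMul_eq_sum_compl B hI]; exact hker⟩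
  · rintro ⟨t, ht, hsum⟩
    set u : ι → R := fun i => if i ∈ I then 0 else t i
    have hI : ∀ i ∈ I, u i = 0 := fun i hi => if_pos hi
    have hIc : ∀ i ∉ I, u i = t i := fun i hi => if_neg hi
    refine ⟨u, ?_, hI, fun i hi => hIc i hi ▸ ht i hi⟩
    rw [LinearMap.mem_ker, vecMulLinear_apply, vecMul_eq_sum_compl B hI, ← hsum]
    exact Finset.sum_congr rfl fun i hi => by rw [hIc i (Finset.mem_compl.1 hi)]

end Semiring

end Matrix

theorem exists_functional_slack_iff_exists_mem_range_vecMulLinear {m ι : Type*} [Fintype m]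
    (A : Matrix m ι ℝ) (hone : ∃ y, y ᵥ* A = 1) (I : Set ι) :
    (∃ (l : StrongDual ℝ (m → ℝ)) (c : ℝ), (∀ i ∈ I, l (A.col i) = c) ∧ ∀ i ∉ I, l (A.col i) < c) ↔
      ∃ u ∈ LinearMap.range A.vecMulLinear, (∀ i ∈ I, u i = 0) ∧ ∀ i ∉ I, 0 < u i := by
  classical
  constructor
  · rintro ⟨l, c, hI, hIc⟩
    obtain ⟨y, hy⟩ := hone
    set w : m → ℝ := (dotProductEquiv ℝ m).symm l.toLinearMap
    have hl : ∀ x, l x = w ⬝ᵥ x := fun x =>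
      (congr($((dotProductEquiv ℝ m).apply_symm_apply l.toLinearMap) x)).symm
    have hu : ∀ i, ((c • y - w) ᵥ* A) i = c - l (A.col i) := fun i => by
      rw [sub_vecMul, smul_vecMul, hy, hl, Pi.sub_apply, Pi.smul_apply, Pi.one_apply, smul_eq_mul,
        mul_one]
      rfl
    refine ⟨_, ⟨c • y - w, rfl⟩, fun i hi => ?_, fun i hi => ?_⟩
    · rw [vecMulLinear_apply, hu, hI i hi, sub_self]
    · rw [vecMulLinear_apply, hu, sub_pos]
      exact hIc i hi
  · rintro ⟨_, ⟨w, rfl⟩, hI, hIc⟩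
    let l : StrongDual ℝ (m → ℝ) := LinearMap.toContinuousLinearMap (dotProductEquiv ℝ m (-w))
    have hl : ∀ i, l (A.col i) = -(w ᵥ* A) i := fun i => neg_dotProduct w (A.col i)
    exact ⟨l, 0, fun i hi => by rw [hl, ← vecMulLinear_apply, hI i hi, neg_zero],
      fun i hi => by rw [hl, neg_neg_iff_pos, ← vecMulLinear_apply]; exact hIc i hi⟩

theorem gale_duality_faces_general
    (d n : ℕ)
    (A : Matrix (Fin d) (Fin n) ℤ) (B : Matrix (Fin n) (Fin (n - d)) ℤ)
    (hones : ∃ y : Fin d → ℚ, ∀ j : Fin n, ∑ i, y i * (A i j : ℚ) = 1)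
    (hGale : LinearMap.ker (Matrix.mulVecLin (A.map ((↑) : ℤ → ℚ))) =
      Submodule.span ℚ (Set.range fun k : Fin (n - d) => fun i : Fin n => (B i k : ℚ)))
    (I : Finset (Fin n)) :
    (∃ β : Set (Fin d → ℝ),
        IsExposed ℝ
          (convexHull ℝ (Set.range fun j : Fin n => fun i : Fin d => (A i j : ℝ))) β ∧
        ∀ i : Fin n, (fun r => (A r i : ℝ)) ∈ β ↔ i ∈ I) ↔
      ∃ t : Fin n → ℝ, (∀ i ∉ I, 0 < t i) ∧
        ∑ i ∈ Iᶜ, t i • (fun k : Fin (n - d) => (B i k : ℝ)) = 0 := by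
  set Ar : Matrix (Fin d) (Fin n) ℝ := A.map (↑)
  set Br : Matrix (Fin n) (Fin (n - d)) ℝ := B.map (↑)
  have hrow : LinearMap.range Ar.vecMulLinear = LinearMap.ker Br.vecMulLinear := by
    have := range_vecMulLinear_map_eq_ker_of_ker_eq_range ℝ
      (hGale.trans (Matrix.range_mulVecLin (B.map ((↑) : ℤ → ℚ))).symm)
    simpa [Matrix.map_map, Ar, Br] using this
  have hone : ∃ y, y ᵥ* Ar = 1 := by
    obtain ⟨y, hy⟩ := hones
    refine ⟨fun i => y i, funext fun j => ?_⟩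
    simpa [Matrix.vecMul, dotProduct, Ar] using congr(($(hy j) : ℝ))
  refine (exists_isExposed_convexHull_iff Ar.col (I : Set (Fin n))).trans <|
    (exists_functional_slack_iff_exists_mem_range_vecMulLinear Ar hone _).trans ?_
  rw [hrow]
  exact Br.exists_mem_ker_vecMulLinear_iff I

/-- Gale duality for faces: Let `A` be a `d × n` integer matrix with `(1,…,1)`
in its `ℚ`-row space, `P = Conv(a_1,…,a_n)` the convex hull of its columns in `ℝ^d`, and let
`B` be an `n × (n−d)` integer Gale dual: its columns span `ker(A)` over `ℚ`.  For
`I ⊆ {1,…,n}` there is a face `β` of `P` with `a_i ∈ β ↔ i ∈ I` if and only if there are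
positive reals `t_i` (`i ∈ Iᶜ`) with `Σ_{i ∈ Iᶜ} t_i b_i = 0`. -/
theorem gale_duality_faces
    (d n : ℕ) (hd : d ≤ n)
    (A : Matrix (Fin d) (Fin n) ℤ) (B : Matrix (Fin n) (Fin (n - d)) ℤ)
    (hones : ∃ y : Fin d → ℚ, ∀ j : Fin n, ∑ i, y i * (A i j : ℚ) = 1)
    (hGale : LinearMap.ker (Matrix.mulVecLin (A.map ((↑) : ℤ → ℚ))) =
      Submodule.span ℚ (Set.range fun k : Fin (n - d) => fun i : Fin n => (B i k : ℚ)))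
    (I : Finset (Fin n)) :
    (∃ β : Set (Fin d → ℝ),
        IsExposed ℝ
          (convexHull ℝ (Set.range fun j : Fin n => fun i : Fin d => (A i j : ℝ))) β ∧
        ∀ i : Fin n, (fun r => (A r i : ℝ)) ∈ β ↔ i ∈ I) ↔
      ∃ t : Fin n → ℝ, (∀ i ∉ I, 0 < t i) ∧
        ∑ i ∈ Iᶜ, t i • (fun k : Fin (n - d) => (B i k : ℝ)) = 0 :=
  gale_duality_faces_general d n A B hones hGale I
end
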